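/- Let p be an odd prime, let r ≥ 1 be an integer, let q be a power of p with q > 4r + 1, and let k be a finite field with q elements. Let h ∈ GL₂(k) be a non-scalar matrix such that h² is a scalar matrix. Then there exists g ∈ SL₂(k) commuting with h such that the matrix g·h has two distinct eigenvalues λ₁, λ₂ in an algebraic closure of k, and the multiplicative order of λ₁·λ₂^{−1} is greater than 2r. -/

import Mathlib

open Polynomial


open Subgroup in
lemma lemA {G : Type*} [Group G] {r : ℕ} (t₀ u : G) (hu : u ∈ Subgroup.zpowers t₀)
    (hu2 : u ^ 2 = 1) (hm : 4 * r < orderOf t₀) :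
    ∃ t ∈ Subgroup.zpowers t₀, 2 * r < orderOf (u * t ^ 2) := by
  set m := orderOf t₀ with hmdef
  have hm0 : 0 < m := lt_of_le_of_lt (Nat.zero_le _) hm
  obtain ⟨i, hi⟩ := hu
  have hn : ∃ nn : ℕ, nn < m ∧ t₀ ^ nn = u := by
    refine ⟨(i % (m : ℤ)).toNat, ?_, ?_⟩
    · have h1 : i % (m : ℤ) < m := Int.emod_lt_of_pos i (by exact_mod_cast hm0)
      omega
    · have h0 : (0:ℤ) ≤ i % (m : ℤ) := Int.emod_nonneg i (by positivity)
      rw [← zpow_natCast, Int.toNat_of_nonneg h0, hmdef, zpow_mod_orderOf]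
      exact hi
  obtain ⟨nn, hnm, hnu⟩ := hn
  have hm1 : t₀ ^ m = 1 := by rw [hmdef]; exact pow_orderOf_eq_one t₀
  rcases Nat.even_or_odd nn with he | ho
  · -- u is a square: achieve t₀ ^ 2
    obtain ⟨kk, hkk⟩ := he
    refine ⟨t₀ ^ (m - kk + 1), zpow_natCast t₀ _ ▸ Subgroup.zpow_mem _ (Subgroup.mem_zpowers t₀) _, ?_⟩
    have key : u * (t₀ ^ (m - kk + 1)) ^ 2 = t₀ ^ 2 := by
      rw [← hnu, ← pow_mul, ← pow_add]
      have : nn + (m - kk + 1) * 2 = m * 2 + 2 := by omega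
      rw [this, pow_add, pow_mul, hm1, one_pow, one_mul]
    rw [key]
    have h2 : orderOf (t₀ ^ 2) = m / Nat.gcd m 2 := orderOf_pow' t₀ two_ne_zero
    rw [h2, Nat.lt_div_iff_mul_lt' (Nat.gcd_dvd_left m 2)]
    have : Nat.gcd m 2 ≤ 2 := Nat.le_of_dvd (by norm_num) (Nat.gcd_dvd_right m 2)
    calc Nat.gcd m 2 * (2 * r) ≤ 2 * (2 * r) := by
          exact Nat.mul_le_mul_right _ this
      _ < m := by omega
  · -- u = t₀ ^ (m/2), m = 2 nn : achieve t₀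
    have hdvd : m ∣ 2 * nn := by
      apply orderOf_dvd_of_pow_eq_one
      rw [mul_comm, pow_mul, hnu, hu2]
    have hnn0 : nn ≠ 0 := by rintro rfl; simp [Nat.odd_iff] at ho
    have hm2 : 2 * nn = m := Nat.eq_of_dvd_of_lt_two_mul (by omega) hdvd (by omega)
    have hno : nn % 2 = 1 := Nat.odd_iff.mp ho
    refine ⟨t₀ ^ ((nn + 1) / 2), zpow_natCast t₀ _ ▸ Subgroup.zpow_mem _ (Subgroup.mem_zpowers t₀) _, ?_⟩
    have key : u * (t₀ ^ ((nn + 1) / 2)) ^ 2 = t₀ := by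
      rw [← hnu, ← pow_mul, ← pow_add]
      have : nn + (nn + 1) / 2 * 2 = m + 1 := by omega
      rw [this, pow_add, hm1, one_mul, pow_one]
    rw [key]
    omega


lemma lemB {k K : Type*} [Field k] [Fintype k] [Field K] [Algebra k K] (x : K)
    (hx : x ^ (Fintype.card k) = x) : ∃ y : k, algebraMap k K y = x := by
  classical
  set q := Fintype.card k with hq
  have hq1 : 1 < q := Fintype.one_lt_card
  set P : K[X] := X ^ q - X with hP
  have hP0 : P ≠ 0 := by
    intro h0
    have : P.coeff q = 0 := by rw [h0]; simp
    rw [hP, coeff_sub, coeff_X_pow, coeff_X, if_pos rfl, if_neg (by omega)] at this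
    simp at this
  have hdeg : P.natDegree ≤ q := by
    refine le_trans (natDegree_sub_le _ _) ?_
    simp only [natDegree_X_pow, natDegree_X]
    omega
  have hroot : ∀ y : k, (algebraMap k K y) ∈ P.roots.toFinset := by
    intro y
    rw [Multiset.mem_toFinset, mem_roots hP0]
    simp only [hP, IsRoot, eval_sub, eval_pow, eval_X]
    rw [← map_pow, FiniteField.pow_card, sub_self]
  by_contra hcon
  push_neg at hcon
  have hxroot : x ∈ P.roots.toFinset := by
    rw [Multiset.mem_toFinset, mem_roots hP0]
    simp only [hP, IsRoot, eval_sub, eval_pow, eval_X]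
    rw [hx, sub_self]
  have hsub : insert x ((Finset.univ : Finset k).image (algebraMap k K)) ⊆ P.roots.toFinset := by
    intro z hz
    rcases Finset.mem_insert.mp hz with rfl | hz
    · exact hxroot
    · obtain ⟨y, _, rfl⟩ := Finset.mem_image.mp hz
      exact hroot y
  have hcard : q + 1 ≤ P.roots.toFinset.card := by
    have h1 : ((Finset.univ : Finset k).image (algebraMap k K)).card = q := by
      rw [Finset.card_image_of_injective _ (algebraMap k K).injective, Finset.card_univ]
    have h2 : x ∉ (Finset.univ : Finset k).image (algebraMap k K) := by
      intro hmem
      obtain ⟨y, _, hy⟩ := Finset.mem_image.mp hmem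
      exact hcon y hy
    have := Finset.card_le_card hsub
    rwa [Finset.card_insert_of_notMem h2, h1] at this
  have : P.roots.toFinset.card ≤ q :=
    le_trans (Multiset.toFinset_card_le _) (le_trans (card_roots' P) hdeg)
  omega


lemma charpoly_fin_two' {R : Type*} [CommRing R] (M : Matrix (Fin 2) (Fin 2) R) :
    M.charpoly = X ^ 2 - C M.trace * X + C M.det := by
  rw [Matrix.charpoly, Matrix.det_fin_two, Matrix.charmatrix_apply_eq,
    Matrix.charmatrix_apply_eq, Matrix.charmatrix_apply_ne _ _ _ (by decide),
    Matrix.charmatrix_apply_ne _ _ _ (by decide), Matrix.trace_fin_two, Matrix.det_fin_two]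
  simp only [map_add, map_mul, map_sub]
  ring

lemma endgame (r : ℕ) (hr : 1 ≤ r) (k : Type*) [Field k] [Fintype k]
    (h : Matrix.GeneralLinearGroup (Fin 2) k) (c : k) (hc0 : c ≠ 0)
    (hmul : (h : Matrix (Fin 2) (Fin 2) k) * (h : Matrix (Fin 2) (Fin 2) k) = c • 1)
    (htr : (h : Matrix (Fin 2) (Fin 2) k).trace = 0)
    (hdet : (h : Matrix (Fin 2) (Fin 2) k).det = -c)
    (a b : k) (hab : a ^ 2 - b ^ 2 * c = 1)
    (s : AlgebraicClosure k) (hs : s ^ 2 = algebraMap k (AlgebraicClosure k) c) (hs0 : s ≠ 0)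
    (hord : 2 * r < orderOf
      (-(algebraMap k (AlgebraicClosure k) a + algebraMap k (AlgebraicClosure k) b * s) ^ 2)) :
    ∃ g : Matrix.SpecialLinearGroup (Fin 2) k,
      Commute (g : Matrix (Fin 2) (Fin 2) k) (h : Matrix (Fin 2) (Fin 2) k) ∧
      ∃ l₁ l₂ : AlgebraicClosure k, l₁ ≠ l₂ ∧
        (Matrix.charpoly
          (((g : Matrix (Fin 2) (Fin 2) k) * (h : Matrix (Fin 2) (Fin 2) k)).map
            (algebraMap k (AlgebraicClosure k)))).IsRoot l₁ ∧
        (Matrix.charpoly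
          (((g : Matrix (Fin 2) (Fin 2) k) * (h : Matrix (Fin 2) (Fin 2) k)).map
            (algebraMap k (AlgebraicClosure k)))).IsRoot l₂ ∧
        2 * r < orderOf (l₁ * l₂⁻¹) := by
  classical
  set φ := algebraMap k (AlgebraicClosure k) with hφdef
  set hmm : Matrix (Fin 2) (Fin 2) k := (h : Matrix (Fin 2) (Fin 2) k) with hhmm
  have htr2 : hmm 0 0 + hmm 1 1 = 0 := by rw [← Matrix.trace_fin_two]; exact htr
  have hdet2 : hmm 0 0 * hmm 1 1 - hmm 0 1 * hmm 1 0 = -c := by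
    rw [← Matrix.det_fin_two]; exact hdet
  set gm : Matrix (Fin 2) (Fin 2) k := a • (1 : Matrix (Fin 2) (Fin 2) k) + b • hmm with hgm
  have hdetg : gm.det = 1 := by
    rw [Matrix.det_fin_two]
    simp only [hgm, Matrix.add_apply, Matrix.smul_apply, Matrix.one_apply, smul_eq_mul]
    norm_num
    linear_combination hab + b ^ 2 * hdet2 + a * b * htr2
  set g : Matrix.SpecialLinearGroup (Fin 2) k := ⟨gm, hdetg⟩ with hgdef
  have hgcoe : (g : Matrix (Fin 2) (Fin 2) k) = gm := rfl
  have hcomm : Commute (g : Matrix (Fin 2) (Fin 2) k) (h : Matrix (Fin 2) (Fin 2) k) := by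
    rw [Commute, SemiconjBy, hgcoe, ← hhmm, hgm]
    rw [add_mul, mul_add, smul_mul_assoc, mul_smul_comm, smul_mul_assoc, mul_smul_comm,
      one_mul, mul_one]
  have ghm : gm * hmm = (b * c) • (1 : Matrix (Fin 2) (Fin 2) k) + a • hmm := by
    rw [hgm, add_mul, smul_mul_assoc, one_mul, smul_mul_assoc, hmul, smul_smul, add_comm]
  have htrg : (gm * hmm).trace = 2 * (b * c) := by
    rw [ghm, Matrix.trace_add, Matrix.trace_smul, Matrix.trace_smul, Matrix.trace_one, htr]
    simp
    ring
  have hdetgh : (gm * hmm).det = -c := by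
    rw [Matrix.det_mul, hdetg, hdet, one_mul]
  have hcp : ((gm * hmm).map φ).charpoly =
      X ^ 2 - C (φ (2 * (b * c))) * X + C (φ (-c)) := by
    rw [Matrix.charpoly_map, charpoly_fin_two' (gm * hmm), htrg, hdetgh]
    simp only [Polynomial.map_add, Polynomial.map_sub, Polynomial.map_pow,
      Polynomial.map_mul, Polynomial.map_X, Polynomial.map_C]
  have habφ : (φ a) ^ 2 - (φ b) ^ 2 * s ^ 2 = 1 := by
    rw [hs, ← map_pow, ← map_pow, ← map_mul, ← map_sub, hab, map_one]
  set l₁ : AlgebraicClosure k := φ (b * c) + φ a * s with hl₁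
  set l₂ : AlgebraicClosure k := φ (b * c) - φ a * s with hl₂
  set x : AlgebraicClosure k := -(φ a + φ b * s) ^ 2 with hx
  have hroot : ∀ l : AlgebraicClosure k, l ^ 2 - φ (2 * (b * c)) * l + φ (-c) = 0 →
      (Matrix.charpoly (((g : Matrix (Fin 2) (Fin 2) k) * (h : Matrix (Fin 2) (Fin 2) k)).map
        φ)).IsRoot l := by
    intro l hl
    rw [hgcoe, ← hhmm, Polynomial.IsRoot, hcp]
    simp only [eval_add, eval_sub, eval_pow, eval_mul, eval_C, eval_X]
    linear_combination hl
  have hbc : φ (b * c) = φ b * s ^ 2 := by rw [hs, map_mul]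
  have h2 : φ (2 * (b * c)) = 2 * (φ b * s ^ 2) := by
    rw [map_mul, hbc, map_ofNat]
  have hnegc : φ (-c) = -s ^ 2 := by rw [map_neg, hs]
  have hroot1 : l₁ ^ 2 - φ (2 * (b * c)) * l₁ + φ (-c) = 0 := by
    rw [hl₁, h2, hnegc, hbc]
    linear_combination (s ^ 2) * habφ
  have hroot2 : l₂ ^ 2 - φ (2 * (b * c)) * l₂ + φ (-c) = 0 := by
    rw [hl₂, h2, hnegc, hbc]
    linear_combination (s ^ 2) * habφ
  have hl12 : l₁ * l₂ = -s ^ 2 := by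
    rw [hl₁, hl₂, hbc]
    linear_combination (-s ^ 2) * habφ
  have hl₂0 : l₂ ≠ 0 := by
    intro h0
    rw [h0, mul_zero] at hl12
    have hss : s ^ 2 = 0 := by linear_combination hl12
    exact hs0 ((pow_eq_zero_iff two_ne_zero).mp hss)
  have hx1 : l₁ = x * l₂ := by
    rw [hl₁, hl₂, hx, hbc]
    linear_combination (-(s * (φ a + φ b * s))) * habφ
  have hratio : l₁ * l₂⁻¹ = x := by
    rw [hx1, mul_inv_cancel_right₀ hl₂0]
  have hne : l₁ ≠ l₂ := by
    intro he
    have hx1' : x = 1 := by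
      rw [← hratio, he, mul_inv_cancel₀ hl₂0]
    rw [hx1', orderOf_one] at hord
    omega
  exact ⟨g, hcomm, l₁, l₂, hne, hroot l₁ hroot1, hroot l₂ hroot2, by rwa [hratio]⟩



/-- Let `p` be an odd prime, let `r ≥ 1` be an integer, let `q` be a power of `p` with
`q > 4 * r + 1`, and let `k` be a finite field with `q` elements. Let `h ∈ GL₂(k)` be a
non-scalar matrix such that `h ^ 2` is a scalar matrix. Then there exists `g ∈ SL₂(k)`
commuting with `h` such that the matrix `g * h` has two distinct eigenvalues `λ₁, λ₂` in an
algebraic closure of `k`, and the multiplicative order of `λ₁ * λ₂⁻¹` is greater than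
`2 * r`. -/
theorem exists_commuting_element_large_eigenvalue_ratio
    (p : ℕ) (hp : p.Prime) (hodd : p ≠ 2) (r : ℕ) (hr : 1 ≤ r)
    (n : ℕ) (hn : n ≠ 0) (q : ℕ) (hq : q = p ^ n) (hqr : 4 * r + 1 < q)
    (k : Type*) [Field k] [Fintype k] (hk : Fintype.card k = q)
    (h : Matrix.GeneralLinearGroup (Fin 2) k)
    (hns : ¬ ∃ c : k, (h : Matrix (Fin 2) (Fin 2) k) = c • (1 : Matrix (Fin 2) (Fin 2) k))
    (hsq : ∃ c : k, ((h ^ 2 : Matrix.GeneralLinearGroup (Fin 2) k) :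
      Matrix (Fin 2) (Fin 2) k) = c • (1 : Matrix (Fin 2) (Fin 2) k)) :
    ∃ g : Matrix.SpecialLinearGroup (Fin 2) k,
      Commute (g : Matrix (Fin 2) (Fin 2) k) (h : Matrix (Fin 2) (Fin 2) k) ∧
      ∃ l₁ l₂ : AlgebraicClosure k, l₁ ≠ l₂ ∧
        (Matrix.charpoly
          (((g : Matrix (Fin 2) (Fin 2) k) * (h : Matrix (Fin 2) (Fin 2) k)).map
            (algebraMap k (AlgebraicClosure k)))).IsRoot l₁ ∧
        (Matrix.charpoly
          (((g : Matrix (Fin 2) (Fin 2) k) * (h : Matrix (Fin 2) (Fin 2) k)).map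
            (algebraMap k (AlgebraicClosure k)))).IsRoot l₂ ∧
        2 * r < orderOf (l₁ * l₂⁻¹) := by
  classical
  obtain ⟨c, hc⟩ := hsq
  set φ := algebraMap k (AlgebraicClosure k) with hφdef
  have hφinj : Function.Injective φ := φ.injective
  set hmm : Matrix (Fin 2) (Fin 2) k := (h : Matrix (Fin 2) (Fin 2) k) with hhmm
  have hmul : hmm * hmm = c • 1 := by
    rw [hhmm, ← pow_two, ← Units.val_pow_eq_pow_val]
    exact hc
  have hent := Matrix.ext_iff.mpr hmul
  have e00 : hmm 0 0 * hmm 0 0 + hmm 0 1 * hmm 1 0 = c := by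
    simpa [Matrix.mul_apply, Fin.sum_univ_two, Matrix.smul_apply, Matrix.one_apply]
      using hent 0 0
  have e01 : hmm 0 0 * hmm 0 1 + hmm 0 1 * hmm 1 1 = 0 := by
    simpa [Matrix.mul_apply, Fin.sum_univ_two, Matrix.smul_apply, Matrix.one_apply]
      using hent 0 1
  have e10 : hmm 1 0 * hmm 0 0 + hmm 1 1 * hmm 1 0 = 0 := by
    simpa [Matrix.mul_apply, Fin.sum_univ_two, Matrix.smul_apply, Matrix.one_apply]
      using hent 1 0
  have e11 : hmm 1 0 * hmm 0 1 + hmm 1 1 * hmm 1 1 = c := by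
    simpa [Matrix.mul_apply, Fin.sum_univ_two, Matrix.smul_apply, Matrix.one_apply]
      using hent 1 1
  have htr2 : hmm 0 0 + hmm 1 1 = 0 := by
    by_contra hT
    have h01 : hmm 0 1 = 0 := by
      rcases mul_eq_zero.mp (show hmm 0 1 * (hmm 0 0 + hmm 1 1) = 0 by linear_combination e01)
        with h' | h'
      · exact h'
      · exact absurd h' hT
    have h10 : hmm 1 0 = 0 := by
      rcases mul_eq_zero.mp (show hmm 1 0 * (hmm 0 0 + hmm 1 1) = 0 by linear_combination e10)
        with h' | h'
      · exact h'
      · exact absurd h' hT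
    have heq : hmm 0 0 = hmm 1 1 := by
      rcases mul_eq_zero.mp (show (hmm 0 0 - hmm 1 1) * (hmm 0 0 + hmm 1 1) = 0 by
        linear_combination e00 - e11 + (hmm 1 0) * h01 - (hmm 0 1) * h10) with h' | h'
      · exact sub_eq_zero.mp h'
      · exact absurd h' hT
    exact hns ⟨hmm 0 0, by
      ext i j
      fin_cases i <;> fin_cases j <;>
        simp [← hhmm, Matrix.smul_apply, Matrix.one_apply, h01, h10, ← heq]⟩
  have htr : hmm.trace = 0 := by rw [Matrix.trace_fin_two]; exact htr2
  have hdet : hmm.det = -c := by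
    rw [Matrix.det_fin_two]
    linear_combination -e00 + hmm 0 0 * htr2
  have hc0 : c ≠ 0 := by
    have hu : IsUnit hmm := h.isUnit
    have hdu : hmm.det ≠ 0 := ((Matrix.isUnit_iff_isUnit_det hmm).mp hu).ne_zero
    rw [hdet] at hdu
    exact fun h0 => hdu (by rw [h0, neg_zero])
  -- characteristic
  have hq0 : ((q : ℕ) : k) = 0 := by rw [← hk]; exact FiniteField.cast_card_eq_zero k
  have hp0 : ((p : ℕ) : k) = 0 := by
    have : ((p : k)) ^ n = 0 := by
      rw [← Nat.cast_pow, ← hq]; exact hq0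
    exact pow_eq_zero_iff hn |>.mp this
  have hringchar : ringChar k = p := by
    have hdvd : ringChar k ∣ p := (CharP.cast_eq_zero_iff k (ringChar k) p).mp hp0
    rcases (Nat.Prime.eq_one_or_self_of_dvd hp _ hdvd) with h1 | h1
    · exact absurd h1 (CharP.ringChar_ne_one)
    · exact h1
  haveI : CharP k p := hringchar ▸ ringChar.charP k
  haveI : Fact p.Prime := ⟨hp⟩
  have h2k : (2 : k) ≠ 0 := by
    intro h2
    have : (p : ℕ) ∣ 2 := (CharP.cast_eq_zero_iff k p 2).mp (by exact_mod_cast h2)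
    exact hodd ((Nat.prime_dvd_prime_iff_eq hp Nat.prime_two).mp this)
  have hqodd : q % 2 = 1 := by
    exact Nat.odd_iff.mp (by rw [hq]; exact (hp.odd_of_ne_two hodd).pow)
  by_cases hsqc : IsSquare c
  · -- split case
    obtain ⟨s₀, hs₀⟩ := hsqc
    have hs₀0 : s₀ ≠ 0 := by rintro rfl; rw [mul_zero] at hs₀; exact hc0 hs₀
    obtain ⟨ζ, hζ⟩ := IsCyclic.exists_generator (α := kˣ)
    have horder : orderOf ζ = q - 1 := by
      rw [orderOf_eq_card_of_forall_mem_zpowers hζ, Nat.card_eq_fintype_card, Fintype.card_units, hk]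
    obtain ⟨t, htmem, hordt⟩ := lemA (r := r) ζ (-1) (hζ (-1)) (by simp) (by rw [horder]; omega)
    set T : k := ((t : kˣ) : k) with hTdef
    set Ti : k := ((t⁻¹ : kˣ) : k) with hTidef
    have hTi : T * Ti = 1 := Units.mul_inv t
    set a : k := (T + Ti) / 2 with hadef
    set b : k := (T - Ti) / (2 * s₀) with hbdef
    have hab : a ^ 2 - b ^ 2 * c = 1 := by
      rw [hadef, hbdef, hs₀]
      field_simp
      linear_combination 4 * hTi
    have hsφ : (φ s₀) ^ 2 = φ c := by rw [← map_pow, pow_two, ← hs₀]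
    have hsφ0 : φ s₀ ≠ 0 := fun h0 => hs₀0 (hφinj (by rw [h0, map_zero]))
    have habT : a + b * s₀ = T := by
      rw [hadef, hbdef]
      field_simp
      ring
    have hvalx : ((((-1) * t ^ 2 : kˣ) : k)) = -(T ^ 2) := by
      push_cast
      ring
    have hordx : 2 * r < orderOf (-(φ a + φ b * φ s₀) ^ 2) := by
      have h1 : -(φ a + φ b * φ s₀) ^ 2 = φ ((((-1) * t ^ 2 : kˣ) : k)) := by
        rw [hvalx, ← map_mul, ← map_add, habT, map_neg, map_pow]
      have h2 : orderOf (φ ((((-1) * t ^ 2 : kˣ) : k))) =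
          orderOf ((((-1) * t ^ 2 : kˣ) : k)) := orderOf_injective φ.toMonoidHom hφinj _
      rw [h1, h2, orderOf_units]
      exact hordt
    exact endgame r hr k h c hc0 hmul htr hdet a b hab (φ s₀) hsφ hsφ0 hordx
  · -- nonsplit case
    haveI : CharP (AlgebraicClosure k) p := charP_of_injective_algebraMap hφinj p
    have heul : c ^ (q / 2) = -1 := by
      have h1 : c ^ (q / 2) ≠ 1 := by
        intro h1
        exact hsqc ((FiniteField.isSquare_iff (by rw [hringchar]; exact hodd) hc0).mpr
          (by rwa [hk]))
      have h2 : (c ^ (q / 2)) ^ 2 = 1 := by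
        rw [← pow_mul]
        have hqq : q / 2 * 2 = q - 1 := by omega
        rw [hqq, ← hk]
        exact FiniteField.pow_card_sub_one_eq_one c hc0
      rcases sq_eq_one_iff.mp h2 with h' | h'
      · exact absurd h' h1
      · exact h'
    obtain ⟨s, hss⟩ := IsAlgClosed.exists_pow_nat_eq (φ c) (n := 2) (by norm_num)
    have hs0 : s ≠ 0 := by
      intro h0
      rw [h0, zero_pow (by norm_num)] at hss
      exact hc0 (hφinj (by rw [← hss, map_zero]))
    have h2K : (2 : AlgebraicClosure k) ≠ 0 := by
      rw [show (2 : AlgebraicClosure k) = φ 2 by rw [map_ofNat]]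
      exact fun h0 => h2k (hφinj (by rw [h0, map_zero]))
    have hsfrob : s ^ q = -s := by
      have h1 : s ^ (q - 1) = -1 := by
        have e1 : s ^ (q - 1) = (s ^ 2) ^ (q / 2) := by
          rw [← pow_mul]
          congr 1
          omega
        rw [e1, hss, ← map_pow, heul, map_neg, map_one]
      calc s ^ q = s ^ (q - 1) * s := by rw [← pow_succ]; congr 1; omega
        _ = -s := by rw [h1]; ring
    haveI : NeZero ((q + 1 : ℕ) : AlgebraicClosure k) := by
      constructor
      push_cast [hq]
      rw [show ((p : AlgebraicClosure k)) = 0 from CharP.cast_eq_zero _ p]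
      rw [zero_pow hn]
      norm_num
    obtain ⟨ζK, hζK⟩ := HasEnoughRootsOfUnity.exists_primitiveRoot (AlgebraicClosure k) (q + 1)
    have hζunit : IsUnit ζK := hζK.isUnit (by omega)
    have hζ' : IsPrimitiveRoot hζunit.unit (q + 1) := hζK.isUnit_unit (by omega)
    set ζ : (AlgebraicClosure k)ˣ := hζunit.unit with hζdef
    have hordζ : orderOf ζ = q + 1 := hζ'.eq_orderOf.symm
    have hζq1 : ζ ^ (q + 1) = 1 := by rw [← hordζ]; exact pow_orderOf_eq_one ζ
    have hw2 : (ζ ^ ((q + 1) / 2)) ^ 2 = 1 := by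
      rw [← pow_mul]
      have : (q + 1) / 2 * 2 = q + 1 := by omega
      rw [this, hζq1]
    have hw1 : ζ ^ ((q + 1) / 2) ≠ 1 := by
      intro h1
      have hd := orderOf_dvd_of_pow_eq_one h1
      rw [hordζ] at hd
      have := Nat.le_of_dvd (by omega) hd
      omega
    have hwneg : ζ ^ ((q + 1) / 2) = -1 := by
      have hv : ((ζ ^ ((q + 1) / 2) : (AlgebraicClosure k)ˣ) : AlgebraicClosure k) ^ 2 = 1 := by
        rw [← Units.val_pow_eq_pow_val, hw2, Units.val_one]
      rcases sq_eq_one_iff.mp hv with h' | h'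
      · exact absurd (Units.ext (by rw [h', Units.val_one])) hw1
      · exact Units.ext (by rw [h']; simp)
    have hu : (-1 : (AlgebraicClosure k)ˣ) ∈ Subgroup.zpowers ζ :=
      ⟨(((q + 1) / 2 : ℕ) : ℤ), by show ζ ^ ((((q + 1) / 2 : ℕ)) : ℤ) = -1; rw [zpow_natCast]; exact hwneg⟩
    obtain ⟨t, htmem, hordt⟩ := lemA (r := r) ζ (-1) hu (by simp) (by rw [hordζ]; omega)
    have ht1 : t ^ (q + 1) = 1 := by
      obtain ⟨i, rfl⟩ := htmem
      have h1 : ((ζ ^ i) ^ (q + 1) : (AlgebraicClosure k)ˣ) = (ζ ^ ((q + 1 : ℕ) : ℤ)) ^ i := by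
        rw [← zpow_natCast (ζ ^ i) (q + 1), ← zpow_mul, mul_comm, zpow_mul]
      rw [h1, zpow_natCast, hζq1, one_zpow]
    set T : AlgebraicClosure k := ((t : (AlgebraicClosure k)ˣ) : AlgebraicClosure k) with hTdef
    have hT1 : T ^ (q + 1) = 1 := by
      rw [hTdef, ← Units.val_pow_eq_pow_val, ht1, Units.val_one]
    have hTq : T ^ q * T = 1 := by rw [← pow_succ]; exact hT1
    have hT0 : T ≠ 0 := Units.ne_zero t
    have hTinv : T ^ q = T⁻¹ := eq_inv_of_mul_eq_one_left hTq
    have hTq2 : (T ^ q) ^ q = T := by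
      rw [hTinv, inv_pow, hTinv, inv_inv]
    have hden : (2 : AlgebraicClosure k) ^ q = 2 := by
      rw [show (2 : AlgebraicClosure k) = φ 2 by rw [map_ofNat], ← map_pow]
      congr 1
      rw [← hk]
      exact FiniteField.pow_card (2 : k)
    set A : AlgebraicClosure k := (T + T ^ q) / 2 with hAdef
    set B : AlgebraicClosure k := (T - T ^ q) / (2 * s) with hBdef
    have hAq : A ^ q = A := by
      rw [hAdef, div_pow]
      have hnum : (T + T ^ q) ^ q = T ^ q + (T ^ q) ^ q := by
        rw [hq]
        exact add_pow_char_pow T (T ^ p ^ n) p n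
      rw [hnum, hTq2, hden, add_comm]
    have hBq : B ^ q = B := by
      rw [hBdef, div_pow]
      have hnum : (T - T ^ q) ^ q = T ^ q - (T ^ q) ^ q := by
        rw [hq]
        exact sub_pow_char_pow T (T ^ p ^ n) n
      have hden2 : (2 * s) ^ q = -(2 * s) := by
        rw [mul_pow, hden, hsfrob]
        ring
      rw [hnum, hTq2, hden2, div_neg, ← neg_div, neg_sub]
    obtain ⟨a, ha⟩ := lemB A (by rw [hk]; exact hAq)
    obtain ⟨b, hb⟩ := lemB B (by rw [hk]; exact hBq)
    have h2s : (2 : AlgebraicClosure k) * s ≠ 0 := mul_ne_zero h2K hs0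
    have hss' : s ^ 2 = φ c := hss
    have hab : a ^ 2 - b ^ 2 * c = 1 := by
      apply hφinj
      rw [map_sub, map_pow, map_mul, map_pow, ha, hb, map_one, ← hss', hAdef, hBdef]
      field_simp
      linear_combination 4 * hTq
    have hABT : A + B * s = T := by
      rw [hAdef, hBdef]
      field_simp
      ring
    have hvalx : ((((-1) * t ^ 2 : (AlgebraicClosure k)ˣ) : AlgebraicClosure k)) = -(T ^ 2) := by
      rw [hTdef]
      push_cast
      ring
    have hordx : 2 * r < orderOf (-(φ a + φ b * s) ^ 2) := by
      have h1 : -(φ a + φ b * s) ^ 2 = ((((-1) * t ^ 2 : (AlgebraicClosure k)ˣ) :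
          AlgebraicClosure k)) := by
        rw [hvalx, ha, hb, hABT]
      rw [h1, orderOf_units]
      exact hordt
    exact endgame r hr k h c hc0 hmul htr hdet a b hab s hss' hs0 hordx
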